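/- arXiv:2511.05255 — 5 statements merged into one kernel-verified Lean document; each statement's English description precedes it below -/
import Mathlib

section
/- Let F(x) = λ||x||_1^2/||x||_2^2 + q(Ax−b) on X \ {0}, where q is continuous and nonnegative, λ > 0, X ⊆ R^n closed with 0 ∈ X, and let ν* = inf over X \ {0} of F. If {x^k} ⊆ X \ {0} is a minimizing sequence (F(x^k) → ν*), ν* < λ + q(−b), and x^k converges to some x*, then x* ∈ X \ {0} and F(x*) = ν* (i.e., any accumulation point of a minimizing sequence is an optimal solution). -/
/-!
The ratio `‖x‖₁² / ‖x‖₂²` is at least `1` and continuous away from `0`. If the minimizing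
sequence tended to `0`, the lower bound would give `ν* ≥ λ + q(-b)` in the limit, contradicting
the assumption; so the limit is nonzero, lies in the closed set `X`, and `F` is continuous there,
whence `F x* = lim F(xᵏ) = ν*`.
-/

open Filter Topology Matrix

section SqL1L2Ratio

variable {ι : Type*} [Fintype ι]

noncomputable def sqL1L2Ratio (x : ι → ℝ) : ℝ :=
  (∑ i, |x i|) ^ 2 / ∑ i, x i ^ 2

lemma sum_sq_pos_of_ne_zero {x : ι → ℝ} (hx : x ≠ 0) : 0 < ∑ i, x i ^ 2 := by
  obtain ⟨i, hi⟩ : ∃ i, x i ≠ 0 := Function.ne_iff.mp hx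
  exact Finset.sum_pos' (fun j _ => sq_nonneg (x j)) ⟨i, Finset.mem_univ i, by positivity⟩

lemma sum_sq_le_sq_sum_abs (x : ι → ℝ) : ∑ i, x i ^ 2 ≤ (∑ i, |x i|) ^ 2 := by
  simpa only [sq_abs] using
    Finset.sum_sq_le_sq_sum_of_nonneg (s := Finset.univ) fun i _ => abs_nonneg (x i)

lemma one_le_sqL1L2Ratio {x : ι → ℝ} (hx : x ≠ 0) : 1 ≤ sqL1L2Ratio x :=
  (one_le_div (sum_sq_pos_of_ne_zero hx)).mpr (sum_sq_le_sq_sum_abs x)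

lemma continuousAt_sqL1L2Ratio {x : ι → ℝ} (hx : x ≠ 0) : ContinuousAt sqL1L2Ratio x := by
  unfold sqL1L2Ratio
  have hnum : Continuous fun x : ι → ℝ => (∑ i, |x i|) ^ 2 := by fun_prop
  have hden : Continuous fun x : ι → ℝ => ∑ i, x i ^ 2 := by fun_prop
  exact hnum.continuousAt.div hden.continuousAt (sum_sq_pos_of_ne_zero hx).ne'

end SqL1L2Ratio

theorem limit_of_minimizing_sequence_is_optimal_general {m n : ℕ}
    (A : Matrix (Fin m) (Fin n) ℝ) (b : Fin m → ℝ)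
    (lam : ℝ) (hlam : 0 < lam) (q : (Fin m → ℝ) → ℝ)
    (hq : Continuous q)
    (X : Set (Fin n → ℝ)) (hX : IsClosed X)
    (F : (Fin n → ℝ) → ℝ)
    (hF : ∀ x, F x = lam * ((∑ i, |x i|) ^ 2 / (∑ i, (x i) ^ 2)) + q (A.mulVec x - b))
    (nustar : ℝ)
    (hlt : nustar < lam + q (-b))
    (xk : ℕ → (Fin n → ℝ)) (hxk : ∀ k, xk k ∈ X \ {0})
    (hmin : Tendsto (fun k => F (xk k)) atTop (𝓝 nustar))
    (xstar : Fin n → ℝ) (hconv : Tendsto xk atTop (𝓝 xstar)) :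
    xstar ∈ X \ {0} ∧ F xstar = nustar := by
  have hF' : F = fun x => lam * sqL1L2Ratio x + q (A *ᵥ x - b) := funext hF
  have hfit_cont : Continuous fun x => q (A *ᵥ x - b) := by fun_prop
  have hfit_tendsto : Tendsto (fun k => q (A *ᵥ xk k - b)) atTop (𝓝 (q (A *ᵥ xstar - b))) :=
    (hfit_cont.tendsto xstar).comp hconv
  have hxstar_ne : xstar ≠ 0 := by
    rintro rfl
    have hlower : ∀ k, lam + q (A *ᵥ xk k - b) ≤ F (xk k) := fun k => by
      rw [hF']
      exact add_le_add_left (le_mul_of_one_le_right hlam.le (one_le_sqL1L2Ratio (hxk k).2)) _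
    have hlim_le := le_of_tendsto_of_tendsto' (hfit_tendsto.const_add lam) hmin hlower
    simp only [Matrix.mulVec_zero, zero_sub] at hlim_le
    linarith
  have hxstar_mem : xstar ∈ X := hX.mem_of_tendsto hconv (.of_forall fun k => (hxk k).1)
  have hF_cont : ContinuousAt F xstar := by
    rw [hF']
    exact ((continuousAt_sqL1L2Ratio hxstar_ne).const_mul lam).add hfit_cont.continuousAt
  exact ⟨⟨hxstar_mem, hxstar_ne⟩, tendsto_nhds_unique (hF_cont.tendsto.comp hconv) hmin⟩

/-- Any limit of a minimizing sequence of the squared `L1/L2` regularized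
problem is an optimal solution, provided `ν* < λ + q(−b)`. -/
theorem limit_of_minimizing_sequence_is_optimal {m n : ℕ}
    (A : Matrix (Fin m) (Fin n) ℝ) (b : Fin m → ℝ)
    (lam : ℝ) (hlam : 0 < lam) (q : (Fin m → ℝ) → ℝ)
    (hq : Continuous q) (hq0 : ∀ y, 0 ≤ q y)
    (X : Set (Fin n → ℝ)) (hX : IsClosed X) (h0X : (0 : Fin n → ℝ) ∈ X)
    (F : (Fin n → ℝ) → ℝ)
    (hF : ∀ x, F x = lam * ((∑ i, |x i|) ^ 2 / (∑ i, (x i) ^ 2)) + q (A.mulVec x - b))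
    (nustar : ℝ)
    (hnu : IsGLB (F '' (X \ {0})) nustar)
    (hlt : nustar < lam + q (-b))
    (xk : ℕ → (Fin n → ℝ)) (hxk : ∀ k, xk k ∈ X \ {0})
    (hmin : Tendsto (fun k => F (xk k)) atTop (𝓝 nustar))
    (xstar : Fin n → ℝ) (hconv : Tendsto xk atTop (𝓝 xstar)) :
    xstar ∈ X \ {0} ∧ F xstar = nustar :=
  limit_of_minimizing_sequence_is_optimal_general A b lam hlam q hq X hX F hF nustar hlt xk hxk hmin
    xstar hconv
end

section
/- Suppose X ⊆ R^n is a nonempty compact set with 0 ∈ X, q : R^m → [0,∞) is continuous, λ > 0, and ν* := inf{λ||x||_1^2/||x||_2^2 + q(Ax−b) : x ∈ X \ {0}} satisfies ν* < λ + q(−b). Then the infimum is attained: there exists x* ∈ X \ {0} with λ||x*||_1^2/||x*||_2^2 + q(Ax*−b) = ν*. -/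
/-- Existence of an optimal solution when `X` is compact and `ν* < λ + q(−b)`. -/
theorem exists_optimal_solution_of_compact {m n : ℕ}
    (A : Matrix (Fin m) (Fin n) ℝ) (b : Fin m → ℝ)
    (lam : ℝ) (hlam : 0 < lam) (q : (Fin m → ℝ) → ℝ)
    (hq : Continuous q) (hq0 : ∀ y, 0 ≤ q y)
    (X : Set (Fin n → ℝ)) (hXne : X.Nonempty) (hX : IsCompact X)
    (h0X : (0 : Fin n → ℝ) ∈ X)
    (F : (Fin n → ℝ) → ℝ)
    (hF : ∀ x, F x = lam * ((∑ i, |x i|) ^ 2 / (∑ i, (x i) ^ 2)) + q (A.mulVec x - b))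
    (nustar : ℝ)
    (hnu : IsGLB (F '' (X \ {0})) nustar)
    (hlt : nustar < lam + q (-b)) :
    ∃ xstar ∈ X \ {0}, F xstar = nustar := by
  classical
  set φ : (Fin n → ℝ) → ℝ := fun x => q (A.mulVec x - b) with hφdef
  have hmv : Continuous fun x : Fin n → ℝ => A.mulVec x :=
    (Matrix.mulVecLin A).continuous_of_finiteDimensional
  have hφc : Continuous φ := hq.comp (hmv.sub continuous_const)
  have hφ0 : φ 0 = q (-b) := by simp [hφdef]
  have hQpos : ∀ x : Fin n → ℝ, x ≠ 0 → 0 < ∑ i, (x i) ^ 2 := by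
    intro x hx
    have h : ∃ i, x i ≠ 0 := by
      by_contra h; push_neg at h; exact hx (funext h)
    obtain ⟨i, hi⟩ := h
    exact Finset.sum_pos' (fun j _ => sq_nonneg _)
      ⟨i, Finset.mem_univ i, by positivity⟩
  have hratio : ∀ x : Fin n → ℝ, x ≠ 0 →
      1 ≤ (∑ i, |x i|) ^ 2 / ∑ i, (x i) ^ 2 := by
    intro x hx
    rw [le_div_iff₀ (hQpos x hx), one_mul]
    calc ∑ i, (x i) ^ 2 = ∑ i, |x i| * |x i| := by
          simp [sq, abs_mul_abs_self]
      _ ≤ ∑ i, |x i| * ∑ j, |x j| :=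
          Finset.sum_le_sum (fun i _ => mul_le_mul_of_nonneg_left
            (Finset.single_le_sum (f := fun j => |x j|) (fun j _ => abs_nonneg _) (Finset.mem_univ i))
            (abs_nonneg _))
      _ = (∑ i, |x i|) ^ 2 := by rw [← Finset.sum_mul, sq]
  have hFlow : ∀ x : Fin n → ℝ, x ≠ 0 → lam + φ x ≤ F x := by
    intro x hx
    rw [hF]
    have h1 := hratio x hx
    have : lam * 1 ≤ lam * ((∑ i, |x i|) ^ 2 / ∑ i, (x i) ^ 2) :=
      mul_le_mul_of_nonneg_left h1 hlam.le
    simp only [hφdef]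
    linarith
  set δ : ℝ := (lam + q (-b) - nustar) / 2 with hδdef
  have hδ : 0 < δ := by simp only [hδdef]; linarith
  have hcont0 : ContinuousAt φ 0 := hφc.continuousAt
  rw [Metric.continuousAt_iff] at hcont0
  obtain ⟨ε, hε, hball⟩ := hcont0 δ hδ
  have hsmall : ∀ x : Fin n → ℝ, x ≠ 0 → ‖x‖ < ε → nustar + δ < F x := by
    intro x hx hxε
    have hd : dist (φ x) (φ 0) < δ := hball (by rwa [dist_zero_right])
    rw [Real.dist_eq, abs_sub_lt_iff] at hd
    have h1 := hFlow x hx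
    have h2 : φ 0 - φ x < δ := hd.2
    have : lam + q (-b) = nustar + 2 * δ := by rw [hδdef]; ring
    linarith [hφ0 ▸ h2]
  -- witness with value < nustar + δ
  have hnotlb : nustar + δ ∉ lowerBounds (F '' (X \ {0})) := by
    intro h
    have := hnu.2 h
    linarith
  obtain ⟨v, hv, hvlt⟩ : ∃ v ∈ F '' (X \ {0}), v < nustar + δ := by
    by_contra h
    push_neg at h
    exact hnotlb fun v hv => h v hv
  obtain ⟨y, hyX, hyF⟩ := hv
  have hy0 : y ≠ 0 := fun h => hyX.2 (by simp [h])
  have hyε : ε ≤ ‖y‖ := by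
    by_contra h
    push_neg at h
    have := hsmall y hy0 h
    rw [hyF] at this
    linarith
  set K : Set (Fin n → ℝ) := X ∩ {x | ε ≤ ‖x‖} with hKdef
  have hKc : IsCompact K := hX.inter_right (isClosed_le continuous_const continuous_norm)
  have hKne : K.Nonempty := ⟨y, hyX.1, hyε⟩
  have hKsub : ∀ x ∈ K, x ≠ 0 := by
    intro x hx h0
    have : ε ≤ ‖x‖ := hx.2
    rw [h0, norm_zero] at this
    linarith
  have hFcont : ContinuousOn F K := by
    have hc : ContinuousOn
        (fun x : Fin n → ℝ => lam * ((∑ i, |x i|) ^ 2 / ∑ i, (x i) ^ 2) + φ x) K := by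
      apply ContinuousOn.add _ hφc.continuousOn
      apply ContinuousOn.mul continuousOn_const
      apply ContinuousOn.div
      · exact ((continuous_finset_sum _ fun i _ => (continuous_apply i).abs).pow 2).continuousOn
      · exact (continuous_finset_sum _ fun i _ => (continuous_apply i).pow 2).continuousOn
      · intro x hx; exact (hQpos x (hKsub x hx)).ne'
    exact hc.congr fun x _ => hF x
  obtain ⟨xstar, hxK, hmin⟩ := hKc.exists_isMinOn hKne hFcont
  have hxmem : xstar ∈ X \ {0} := ⟨hxK.1, fun h => hKsub _ hxK (by simpa using h)⟩
  refine ⟨xstar, hxmem, ?_⟩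
  have h1 : nustar ≤ F xstar := hnu.1 ⟨xstar, hxmem, rfl⟩
  have hfy : F xstar ≤ F y := hmin ⟨hyX.1, hyε⟩
  have h2 : F xstar ≤ nustar := by
    apply hnu.2
    rintro v ⟨z, hz, rfl⟩
    by_cases hzε : ε ≤ ‖z‖
    · exact hmin ⟨hz.1, hzε⟩
    · push_neg at hzε
      have hz0 : z ≠ 0 := fun h => hz.2 (by simp [h])
      have := hsmall z hz0 hzε
      rw [hyF] at hfy
      linarith
  linarith
end

section
/- Let F : R^n → (−∞, +∞] be F(x) = f(x)²/g(x) + h₁(x) − h₂(x) for x ∈ Ω ∩ C and +∞ otherwise, where Ω = {x : g(x) ≠ 0}. Let S = {x : f(x) = g(x) = 0} ≠ ∅, with f, g, h₁, h₂ continuous and g ≥ 0. If x⁰ ∈ dom F satisfies F(x⁰) < inf{liminf_{z→x} F(z) : x ∈ S}, then the level set {x ∈ dom F : F(x) ≤ F(x⁰)} is closed. -/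
open Filter Topology Classical

noncomputable section

/-- Closedness of the level set of the (possibly non-closed) fractional
objective `F`, provided the initial value lies strictly below the infimum of
the liminf values of `F` over the degenerate set `S = {f = g = 0}`. -/
theorem level_set_closed {n : ℕ}
    (f g : (Fin n → ℝ) → ℝ) (h₁ h₂ : (Fin n → ℝ) → ℝ)
    (hf : Continuous f) (hg : Continuous g) (hh₁ : Continuous h₁) (hh₂ : Continuous h₂)
    (hf0 : ∀ x, 0 ≤ f x) (hg0 : ∀ x, 0 ≤ g x)
    (C : Set (Fin n → ℝ)) (hC : IsClosed C)
    (F : (Fin n → ℝ) → EReal)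
    (hF : ∀ x, F x = if g x ≠ 0 ∧ x ∈ C
      then (open Classical in ((f x) ^ 2 / g x + h₁ x - h₂ x : ℝ) : EReal) else ⊤)
    (S : Set (Fin n → ℝ)) (hS : S = {x | f x = 0 ∧ g x = 0}) (hSne : S.Nonempty)
    (x0 : Fin n → ℝ) (hx0dom : g x0 ≠ 0 ∧ x0 ∈ C)
    (hlt : F x0 < sInf {l : EReal | ∃ x ∈ S, l = Filter.liminf F (𝓝 x)}) :
    IsClosed {x | F x ≤ F x0} := by
  obtain ⟨hgx0, hx0C⟩ := hx0dom
  set c : ℝ := f x0 ^ 2 / g x0 + h₁ x0 - h₂ x0 with hc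
  have hFx0 : F x0 = (c : EReal) := by
    rw [hF x0, if_pos ⟨hgx0, hx0C⟩]
  set L : Set (Fin n → ℝ) := {x | F x ≤ F x0} with hL
  have hLsub : ∀ z ∈ L, g z ≠ 0 ∧ z ∈ C ∧ f z ^ 2 / g z + h₁ z - h₂ z ≤ c := by
    intro z hz
    have hz' : F z ≤ F x0 := hz
    rw [hF z] at hz'
    by_cases hcond : g z ≠ 0 ∧ z ∈ C
    · refine ⟨hcond.1, hcond.2, ?_⟩
      rw [if_pos hcond, hFx0] at hz'
      exact_mod_cast hz'
    · rw [if_neg hcond, hFx0] at hz'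
      exact absurd (top_le_iff.mp hz') (EReal.coe_ne_top c)
  refine isClosed_of_closure_subset ?_
  intro x hx
  have hne : (𝓝[L] x).NeBot := mem_closure_iff_nhdsWithin_neBot.mp hx
  have hmem : ∀ᶠ z in 𝓝[L] x, z ∈ L := eventually_mem_nhdsWithin
  have hxC : x ∈ C := by
    have : closure L ⊆ C := closure_minimal (fun z hz => (hLsub z hz).2.1) hC
    exact this hx
  by_cases hgx : g x = 0
  · -- degenerate case: show f x = 0, so x ∈ S, then derive contradiction
    have hfx : f x = 0 := by
      have hsq : ∀ᶠ z in 𝓝[L] x, f z ^ 2 ≤ g z * (c - h₁ z + h₂ z) := by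
        filter_upwards [hmem] with z hz
        obtain ⟨hgz, _, hle⟩ := hLsub z hz
        have hgzpos : 0 < g z := lt_of_le_of_ne (hg0 z) (Ne.symm hgz)
        have : f z ^ 2 / g z ≤ c - h₁ z + h₂ z := by linarith
        calc f z ^ 2 = (f z ^ 2 / g z) * g z := by field_simp
          _ ≤ (c - h₁ z + h₂ z) * g z := by
              exact mul_le_mul_of_nonneg_right this (hg0 z)
          _ = g z * (c - h₁ z + h₂ z) := mul_comm _ _
      have h1 : Filter.Tendsto (fun z => f z ^ 2) (𝓝[L] x) (𝓝 (f x ^ 2)) :=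
        ((hf.pow 2).continuousAt.tendsto).mono_left nhdsWithin_le_nhds
      have h2 : Filter.Tendsto (fun z => g z * (c - h₁ z + h₂ z)) (𝓝[L] x)
          (𝓝 (g x * (c - h₁ x + h₂ x))) :=
        ((hg.mul ((continuous_const.sub hh₁).add hh₂)).continuousAt.tendsto).mono_left
          nhdsWithin_le_nhds
      have hle : f x ^ 2 ≤ g x * (c - h₁ x + h₂ x) :=
        le_of_tendsto_of_tendsto h1 h2 hsq
      rw [hgx, zero_mul] at hle
      have : f x ^ 2 = 0 := le_antisymm hle (sq_nonneg _)
      exact pow_eq_zero_iff (two_ne_zero) |>.mp this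
    have hxS : x ∈ S := by rw [hS]; exact ⟨hfx, hgx⟩
    have hsInf : sInf {l : EReal | ∃ x ∈ S, l = Filter.liminf F (𝓝 x)} ≤
        Filter.liminf F (𝓝 x) := sInf_le ⟨x, hxS, rfl⟩
    have hlt' : F x0 < Filter.liminf F (𝓝 x) := lt_of_lt_of_le hlt hsInf
    have hbdd : Filter.IsBoundedUnder (· ≥ ·) (𝓝 x) F :=
      ⟨⊥, Filter.eventually_map.mpr (Filter.Eventually.of_forall fun _ => bot_le)⟩
    have hev : ∀ᶠ z in 𝓝 x, F x0 < F z :=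
      Filter.eventually_lt_of_lt_liminf hlt' hbdd
    have : ∀ᶠ z in 𝓝[L] x, F x0 < F z := hev.filter_mono nhdsWithin_le_nhds
    obtain ⟨z, hz1, hz2⟩ := (this.and hmem).exists
    exact absurd (lt_of_lt_of_le hz1 hz2) (lt_irrefl _)
  · -- nondegenerate case: F is continuous at x
    have hψ : ContinuousAt (fun z => f z ^ 2 / g z + h₁ z - h₂ z) x := by
      exact ((((hf.pow 2).continuousAt.div hg.continuousAt hgx).add
        hh₁.continuousAt).sub hh₂.continuousAt)
    have ht : Filter.Tendsto (fun z => f z ^ 2 / g z + h₁ z - h₂ z) (𝓝[L] x)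
        (𝓝 (f x ^ 2 / g x + h₁ x - h₂ x)) := hψ.tendsto.mono_left nhdsWithin_le_nhds
    have hevle : ∀ᶠ z in 𝓝[L] x, f z ^ 2 / g z + h₁ z - h₂ z ≤ c := by
      filter_upwards [hmem] with z hz
      exact (hLsub z hz).2.2
    have hle : f x ^ 2 / g x + h₁ x - h₂ x ≤ c := le_of_tendsto ht hevle
    show F x ≤ F x0
    rw [hF x, if_pos ⟨hgx, hxC⟩, hFx0]
    exact_mod_cast hle
end
end

section
/- Let f : R^n → [0,∞) be convex with f(x̂) ≥ 0, C ⊆ R^n closed convex, α > 0, c > 0, and suppose x̂ ∈ prox_{2αcf + ι_C}(x − αw) for some x ∈ C, w ∈ R^n. Then ||x̂ − x||_2 ≤ α||w||_2 + √(α²||w||_2² + 4αc f(x)). -/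
/-! Testing the proximal inequality against the feasible point `x` and expanding the square
gives `½‖x̂ - x‖² + ⟪x̂ - x, αw⟫ ≤ 2αc f(x) - 2αc f(x̂) ≤ 2αc f(x)`; by Cauchy–Schwarz
`t = ‖x̂ - x‖` then satisfies `t² ≤ 2α‖w‖ t + 4αc f(x)`, and the bound is the larger root of
this quadratic. -/

theorem le_add_sqrt_of_sq_le_two_mul_add {t b d : ℝ} (h : t ^ 2 ≤ 2 * b * t + d) :
    t ≤ b + √(b ^ 2 + d) := by
  have hsq : (t - b) ^ 2 ≤ b ^ 2 + d := by linarith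
  linarith [le_abs_self (t - b), Real.abs_le_sqrt hsq]

section InnerProductSpace

variable {E : Type*} [NormedAddCommGroup E] [InnerProductSpace ℝ E]

theorem norm_sub_sq_le_of_prox_le {g : E → ℝ} {x v xh : E} (hg : 0 ≤ g xh)
    (h : g xh + 1 / 2 * ‖xh - (x - v)‖ ^ 2 ≤ g x + 1 / 2 * ‖x - (x - v)‖ ^ 2) :
    ‖xh - x‖ ^ 2 ≤ 2 * ‖v‖ * ‖xh - x‖ + 2 * g x := by
  have hexpand : ‖xh - (x - v)‖ ^ 2 = ‖xh - x‖ ^ 2 + 2 * inner ℝ (xh - x) v + ‖v‖ ^ 2 := by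
    rw [← norm_add_sq_real, sub_sub_eq_add_sub, add_sub_right_comm]
  have hx : x - (x - v) = v := sub_sub_self x v
  have hcs : -(‖xh - x‖ * ‖v‖) ≤ inner ℝ (xh - x) v := neg_le_of_abs_le (abs_real_inner_le_norm _ _)
  rw [hexpand, hx] at h
  linarith

end InnerProductSpace

theorem prox_step_length_bound_general {n : ℕ}
    (f : EuclideanSpace ℝ (Fin n) → ℝ)
    (hf0 : ∀ y, 0 ≤ f y)
    (C : Set (EuclideanSpace ℝ (Fin n)))
    (α c : ℝ) (hα : 0 < α) (hc : 0 < c)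
    (x w xh : EuclideanSpace ℝ (Fin n)) (hx : x ∈ C)
    (hprox : xh ∈ C ∧ ∀ y ∈ C,
      2 * α * c * f xh + (1 / 2) * ‖xh - (x - α • w)‖ ^ 2 ≤
        2 * α * c * f y + (1 / 2) * ‖y - (x - α • w)‖ ^ 2) :
    ‖xh - x‖ ≤ α * ‖w‖ + Real.sqrt (α ^ 2 * ‖w‖ ^ 2 + 4 * α * c * f x) := by
  have hfxh : 0 ≤ 2 * α * c * f xh := by have := hf0 xh; positivity
  have hquad := norm_sub_sq_le_of_prox_le (g := fun y ↦ 2 * α * c * f y) hfxh (hprox.2 x hx)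
  rw [norm_smul, Real.norm_of_nonneg hα.le] at hquad
  calc ‖xh - x‖ ≤ α * ‖w‖ + √((α * ‖w‖) ^ 2 + 2 * (2 * α * c * f x)) :=
        le_add_sqrt_of_sq_le_two_mul_add (by linarith)
    _ = α * ‖w‖ + √(α ^ 2 * ‖w‖ ^ 2 + 4 * α * c * f x) := by ring_nf

/-- Bound on the proximal step length: if `x̂` is a minimizer of
`y ↦ 2αc f(y) + ι_C(y) + ½‖y − (x − αw)‖²` with `f ≥ 0` convex, then
`‖x̂ − x‖ ≤ α‖w‖ + √(α²‖w‖² + 4αc f(x))`. -/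
theorem prox_step_length_bound {n : ℕ}
    (f : EuclideanSpace ℝ (Fin n) → ℝ) (hfconv : ConvexOn ℝ Set.univ f)
    (hf0 : ∀ y, 0 ≤ f y)
    (C : Set (EuclideanSpace ℝ (Fin n))) (hCclosed : IsClosed C) (hCconv : Convex ℝ C)
    (α c : ℝ) (hα : 0 < α) (hc : 0 < c)
    (x w xh : EuclideanSpace ℝ (Fin n)) (hx : x ∈ C)
    (hprox : xh ∈ C ∧ ∀ y ∈ C,
      2 * α * c * f xh + (1 / 2) * ‖xh - (x - α • w)‖ ^ 2 ≤
        2 * α * c * f y + (1 / 2) * ‖y - (x - α • w)‖ ^ 2) :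
    ‖xh - x‖ ≤ α * ‖w‖ + Real.sqrt (α ^ 2 * ‖w‖ ^ 2 + 4 * α * c * f x) :=
  prox_step_length_bound_general f hf0 C α c hα hc x w xh hx hprox
end

section
/- Let A ∈ R^{m×n} with m < n, and suppose ker A has the s-spherical section property. Let {x^k} be a sequence with decomposition x^k = x₁^k + x₂^k, x₁^k ∈ ker A, x₂^k ∈ range Aᵀ, with {x₂^k} bounded and ||x₁^k|| → ∞. Then any limit d of the normalized subsequence x^{k_j}/||x₁^{k_j}||_2 satisfies d ∈ ker A, ||d||_2 = 1, and lim_j ||x^{k_j}||_1²/||x^{k_j}||_2² = ||d||_1²/||d||_2² ≥ m/s. -/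
open Filter Topology

/-- If `ker A` has the `s`-spherical section property and `x^k = x₁^k + x₂^k`
with `x₁^k ∈ ker A`, `x₂^k ∈ range Aᵀ`, `{x₂^k}` bounded and `‖x₁^k‖ → ∞`,
then any limit `d` of the normalized subsequence `x^{k_j}/‖x₁^{k_j}‖₂`
lies in `ker A`, has unit norm, and
`lim_j ‖x^{k_j}‖₁²/‖x^{k_j}‖₂² = ‖d‖₁²/‖d‖₂² ≥ m/s`. -/
theorem normalized_subsequence_limit {m n : ℕ} (hmn : m < n)
    (A : Matrix (Fin m) (Fin n) ℝ) (s : ℝ) (hs : 0 < s)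
    (hssp : ∀ v : Fin n → ℝ, A.mulVec v = 0 → v ≠ 0 →
      Real.sqrt ((m : ℝ) / s) ≤ (∑ i, |v i|) / Real.sqrt (∑ i, (v i) ^ 2))
    (x x₁ x₂ : ℕ → (Fin n → ℝ))
    (hdecomp : ∀ k, x k = x₁ k + x₂ k)
    (hker : ∀ k, A.mulVec (x₁ k) = 0)
    (hrange : ∀ k, ∃ u : Fin m → ℝ, A.transpose.mulVec u = x₂ k)
    (hbdd : ∃ B : ℝ, ∀ k, Real.sqrt (∑ i, (x₂ k i) ^ 2) ≤ B)
    (hdiv : Tendsto (fun k => Real.sqrt (∑ i, (x₁ k i) ^ 2)) atTop atTop)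
    (kj : ℕ → ℕ) (hkj : StrictMono kj)
    (d : Fin n → ℝ)
    (hd : Tendsto (fun j => (Real.sqrt (∑ i, (x₁ (kj j) i) ^ 2))⁻¹ • x (kj j))
      atTop (𝓝 d)) :
    A.mulVec d = 0 ∧ Real.sqrt (∑ i, (d i) ^ 2) = 1 ∧
    Tendsto (fun j => (∑ i, |x (kj j) i|) ^ 2 / (∑ i, (x (kj j) i) ^ 2))
      atTop (𝓝 ((∑ i, |d i|) ^ 2 / (∑ i, (d i) ^ 2))) ∧
    (m : ℝ) / s ≤ (∑ i, |d i|) ^ 2 / (∑ i, (d i) ^ 2) := by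
  obtain ⟨B, hB⟩ := hbdd
  set r : ℕ → ℝ := fun j => Real.sqrt (∑ i, (x₁ (kj j) i) ^ 2) with hrdef
  have hrtop : Tendsto r atTop atTop := hdiv.comp hkj.tendsto_atTop
  have hrpos : ∀ᶠ j in atTop, (0:ℝ) < r j := hrtop.eventually_gt_atTop 0
  -- bound on x₂ in sup norm
  have hBnn : ∀ k, (0:ℝ) ≤ Real.sqrt (∑ i, (x₂ k i) ^ 2) := fun k => Real.sqrt_nonneg _
  have hx2norm : ∀ k, ‖x₂ k‖ ≤ max B 0 := by
    intro k
    rw [pi_norm_le_iff_of_nonneg (le_max_right _ _)]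
    intro i
    have h1 : |x₂ k i| = Real.sqrt ((x₂ k i) ^ 2) := (Real.sqrt_sq_eq_abs _).symm
    rw [Real.norm_eq_abs, h1]
    calc Real.sqrt ((x₂ k i) ^ 2) ≤ Real.sqrt (∑ i, (x₂ k i) ^ 2) := by
          apply Real.sqrt_le_sqrt
          exact Finset.single_le_sum (fun i _ => sq_nonneg (x₂ k i)) (Finset.mem_univ i)
      _ ≤ B := hB k
      _ ≤ max B 0 := le_max_left _ _
  have hx2to0 : Tendsto (fun j => (r j)⁻¹ • x₂ (kj j)) atTop (𝓝 0) := by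
    refine squeeze_zero_norm (a := fun j => |(r j)⁻¹| * max B 0) ?_ ?_
    · intro j
      rw [norm_smul, Real.norm_eq_abs]
      exact mul_le_mul_of_nonneg_left (hx2norm _) (abs_nonneg _)
    · have h0 : Tendsto (fun j => (r j)⁻¹) atTop (𝓝 0) := hrtop.inv_tendsto_atTop
      have := (h0.abs).mul_const (max B 0)
      simpa using this
  have hx1lim : Tendsto (fun j => (r j)⁻¹ • x₁ (kj j)) atTop (𝓝 d) := by
    have heq : (fun j => (r j)⁻¹ • x₁ (kj j))
        = fun j => (r j)⁻¹ • x (kj j) - (r j)⁻¹ • x₂ (kj j) := by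
      funext j
      rw [hdecomp (kj j), smul_add]
      abel
    rw [heq]
    simpa using hd.sub hx2to0
  -- kernel membership
  have hcont : Continuous fun v : Fin n → ℝ => A.mulVec v := by
    have : (fun v : Fin n → ℝ => A.mulVec v) = A.mulVecLin := by
      funext v; simp [Matrix.mulVecLin_apply]
    rw [this]
    exact A.mulVecLin.continuous_of_finiteDimensional
  have hAd : A.mulVec d = 0 := by
    have h1 : Tendsto (fun j => A.mulVec ((r j)⁻¹ • x₁ (kj j))) atTop (𝓝 (A.mulVec d)) :=
      (hcont.tendsto d).comp hx1lim
    have h2 : (fun j => A.mulVec ((r j)⁻¹ • x₁ (kj j))) = fun _ => (0 : Fin m → ℝ) := by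
      funext j
      rw [Matrix.mulVec_smul, hker (kj j), smul_zero]
    rw [h2] at h1
    exact tendsto_nhds_unique h1 tendsto_const_nhds
  -- sum of squares of d is 1
  have hsumcont : Continuous fun v : Fin n → ℝ => ∑ i, (v i) ^ 2 := by
    apply continuous_finset_sum
    intro i _
    exact (continuous_apply i).pow 2
  have hsumd : (∑ i, (d i) ^ 2) = 1 := by
    have h1 : Tendsto (fun j => ∑ i, (((r j)⁻¹ • x₁ (kj j)) i) ^ 2) atTop
        (𝓝 (∑ i, (d i) ^ 2)) := (hsumcont.tendsto d).comp hx1lim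
    have h2 : ∀ᶠ j in atTop, (∑ i, (((r j)⁻¹ • x₁ (kj j)) i) ^ 2) = 1 := by
      filter_upwards [hrpos] with j hj
      have hsq : r j ^ 2 = ∑ i, (x₁ (kj j) i) ^ 2 :=
        Real.sq_sqrt (Finset.sum_nonneg fun i _ => sq_nonneg _)
      have : (∑ i, (((r j)⁻¹ • x₁ (kj j)) i) ^ 2) = ((r j)⁻¹) ^ 2 * ∑ i, (x₁ (kj j) i) ^ 2 := by
        rw [Finset.mul_sum]
        congr 1; funext i
        simp [Pi.smul_apply, mul_pow]
      rw [this, ← hsq, inv_pow, inv_mul_cancel₀ (pow_ne_zero 2 hj.ne')]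
    exact tendsto_nhds_unique (h1.congr' (h2.mono fun j hj => hj)) tendsto_const_nhds
  have hsqrtd : Real.sqrt (∑ i, (d i) ^ 2) = 1 := by rw [hsumd, Real.sqrt_one]
  have hdne : d ≠ 0 := by
    intro h
    rw [h] at hsumd
    simp at hsumd
  -- ratio limit
  have habscont : Continuous fun v : Fin n → ℝ => (∑ i, |v i|) ^ 2 := by
    apply Continuous.pow
    apply continuous_finset_sum
    intro i _
    exact (continuous_apply i).abs
  have hnum : Tendsto (fun j => (∑ i, |((r j)⁻¹ • x (kj j)) i|) ^ 2) atTop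
      (𝓝 ((∑ i, |d i|) ^ 2)) := (habscont.tendsto d).comp hd
  have hden : Tendsto (fun j => ∑ i, (((r j)⁻¹ • x (kj j)) i) ^ 2) atTop
      (𝓝 (∑ i, (d i) ^ 2)) := (hsumcont.tendsto d).comp hd
  have hden1 : (∑ i, (d i) ^ 2) ≠ 0 := by rw [hsumd]; norm_num
  have hratio : Tendsto (fun j => (∑ i, |((r j)⁻¹ • x (kj j)) i|) ^ 2
      / (∑ i, (((r j)⁻¹ • x (kj j)) i) ^ 2)) atTop
      (𝓝 ((∑ i, |d i|) ^ 2 / (∑ i, (d i) ^ 2))) := hnum.div hden hden1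
  have hratio' : Tendsto (fun j => (∑ i, |x (kj j) i|) ^ 2 / (∑ i, (x (kj j) i) ^ 2))
      atTop (𝓝 ((∑ i, |d i|) ^ 2 / (∑ i, (d i) ^ 2))) := by
    apply hratio.congr'
    filter_upwards [hrpos] with j hj
    have h1 : (∑ i, |((r j)⁻¹ • x (kj j)) i|) = (r j)⁻¹ * ∑ i, |x (kj j) i| := by
      rw [Finset.mul_sum]
      congr 1; funext i
      rw [Pi.smul_apply, smul_eq_mul, abs_mul, abs_of_pos (inv_pos.mpr hj)]
    have h2 : (∑ i, (((r j)⁻¹ • x (kj j)) i) ^ 2) = ((r j)⁻¹) ^ 2 * ∑ i, (x (kj j) i) ^ 2 := by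
      rw [Finset.mul_sum]
      congr 1; funext i
      simp [Pi.smul_apply, mul_pow]
    rw [h1, h2, mul_pow]
    exact mul_div_mul_left _ _ (pow_ne_zero 2 (inv_pos.mpr hj).ne')
  -- the inequality
  have hineq : (m : ℝ) / s ≤ (∑ i, |d i|) ^ 2 / (∑ i, (d i) ^ 2) := by
    have h1 := hssp d hAd hdne
    rw [hsqrtd, div_one] at h1
    have h2 : (m : ℝ) / s = Real.sqrt ((m : ℝ) / s) ^ 2 :=
      (Real.sq_sqrt (div_nonneg (Nat.cast_nonneg m) hs.le)).symm
    rw [hsumd, div_one, h2]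
    exact pow_le_pow_left₀ (Real.sqrt_nonneg _) h1 2
  exact ⟨hAd, hsqrtd, hratio', hineq⟩
end
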